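/- For every dimension N ≥ 1, every degree k ∈ ℕ, every δ > 0, and all exponents q, m ∈ [1, +∞] (with the convention 1/∞ = 0), there exists a constant M ≥ 1 depending only on N, k, δ, q and m such that: for every bounded measurable set U ⊆ ℝ^N of positive Lebesgue measure |U| and diameter h_U > 0 satisfying the δ-ball condition, and every polynomial w : ℝ^N → ℝ of total degree at most k, one has M^{-1} · |U|^{1/q − 1/m} · ‖w‖_{L^m(U)} ≤ ‖w‖_{L^q(U)} ≤ M · |U|^{1/q − 1/m} · ‖w‖_{L^m(U)}. In particular, for m < q this is a reverse Lebesgue embedding, bounding the higher-exponent norm by the lower-exponent norm. -/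

import Mathlib

/-!
Polynomials of degree at most `k` on `ℝ^N` form a finite-dimensional space on which the `L¹` norm
over a fixed ball is a norm, so it dominates the sup norm on the unit ball. Rescaling by
`h = diam U` the ball of radius `δ h` contained in `U`, and using `|U| ≤ |B(0, 1)| h^N`, this
becomes `‖w‖_{L^∞(U)} ≤ M |U|⁻¹ ‖w‖_{L¹(U)}` with `M` independent of `U`. Hölder's inequality
(`‖w‖_p ≤ ‖w‖_∞ |U|^{1/p}` and `‖w‖_1 ≤ ‖w‖_r |U|^{1 - 1/r}`) then gives
`‖w‖_p ≤ M |U|^{1/p - 1/r} ‖w‖_r` for every `p` and every `r ≥ 1`; exchanging the two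
exponents gives the reverse inequality.
-/

open MeasureTheory Metric
open scoped ENNReal

noncomputable section

/-- `w : ℝ^N → ℝ` is (given by) a multivariate polynomial of total degree at most `k`. -/
def IsPolyDegLE (N k : ℕ) (w : EuclideanSpace ℝ (Fin N) → ℝ) : Prop :=
  ∃ P : MvPolynomial (Fin N) ℝ, P.totalDegree ≤ k ∧ ∀ x, w x = MvPolynomial.eval (fun i => x i) P

open MvPolynomial
open scoped NNReal

section ReverseHolder

variable {α E : Type*} [MeasurableSpace α] {μ : Measure α} [NormedAddCommGroup E] {f : α → E}
  {A : ℝ≥0∞}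

theorem eLpNorm_le_mul_rpow_measure_univ_mul_eLpNorm (hf : AEStronglyMeasurable f μ)
    (hμ0 : μ Set.univ ≠ 0) (hμ : μ Set.univ ≠ ∞)
    (hsup : eLpNorm f ∞ μ ≤ A * (eLpNorm f 1 μ / μ Set.univ)) (p : ℝ≥0∞) {r : ℝ≥0∞}
    (hr : 1 ≤ r) :
    eLpNorm f p μ ≤ A * μ Set.univ ^ ((p⁻¹).toReal - (r⁻¹).toReal) * eLpNorm f r μ := by
  have hp := eLpNorm_le_eLpNorm_mul_rpow_measure_univ (le_top : p ≤ ∞) hf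
  have h1 := eLpNorm_le_eLpNorm_mul_rpow_measure_univ hr hf
  simp only [ENNReal.toReal_top, div_zero, sub_zero, ENNReal.toReal_one, div_one, one_div,
    ← ENNReal.toReal_inv] at hp h1
  calc eLpNorm f p μ
      ≤ A * (eLpNorm f r μ * μ Set.univ ^ (1 - (r⁻¹).toReal) / μ Set.univ)
          * μ Set.univ ^ (p⁻¹).toReal := by
        refine hp.trans ?_
        gcongr
        exact hsup.trans (by gcongr)
    _ = A * μ Set.univ ^ ((p⁻¹).toReal - (r⁻¹).toReal) * eLpNorm f r μ := by
        rw [sub_eq_add_neg, ENNReal.rpow_add _ _ hμ0 hμ, ENNReal.rpow_one, mul_comm (μ Set.univ),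
          ← mul_assoc, ENNReal.mul_div_cancel_right hμ0 hμ, sub_eq_neg_add,
          ENNReal.rpow_add _ _ hμ0 hμ]
        ring

theorem inv_mul_rpow_measure_univ_mul_eLpNorm_le (hf : AEStronglyMeasurable f μ)
    (hμ0 : μ Set.univ ≠ 0) (hμ : μ Set.univ ≠ ∞) (hA0 : A ≠ 0) (hA : A ≠ ∞)
    (hsup : eLpNorm f ∞ μ ≤ A * (eLpNorm f 1 μ / μ Set.univ)) {p : ℝ≥0∞} (hp : 1 ≤ p)
    (r : ℝ≥0∞) :
    A⁻¹ * μ Set.univ ^ ((p⁻¹).toReal - (r⁻¹).toReal) * eLpNorm f r μ ≤ eLpNorm f p μ := by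
  have hdirect := eLpNorm_le_mul_rpow_measure_univ_mul_eLpNorm hf hμ0 hμ hsup r hp
  calc A⁻¹ * μ Set.univ ^ ((p⁻¹).toReal - (r⁻¹).toReal) * eLpNorm f r μ
      ≤ A⁻¹ * μ Set.univ ^ ((p⁻¹).toReal - (r⁻¹).toReal)
          * (A * μ Set.univ ^ ((r⁻¹).toReal - (p⁻¹).toReal) * eLpNorm f p μ) := by gcongr
    _ = (A⁻¹ * A) * μ Set.univ ^ ((p⁻¹).toReal - (r⁻¹).toReal + ((r⁻¹).toReal - (p⁻¹).toReal))
          * eLpNorm f p μ := by rw [ENNReal.rpow_add _ _ hμ0 hμ]; ring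
    _ = eLpNorm f p μ := by rw [ENNReal.inv_mul_cancel hA0 hA]; simp

end ReverseHolder

namespace MvPolynomial

variable {σ τ R : Type*} [CommSemiring R]

theorem totalDegree_bind₁_le {f : σ → MvPolynomial τ R} {d : ℕ}
    (hf : ∀ i, (f i).totalDegree ≤ d) (p : MvPolynomial σ R) :
    (bind₁ f p).totalDegree ≤ d * p.totalDegree := by
  conv_lhs => rw [← support_sum_monomial_coeff p]
  rw [map_sum]
  refine (totalDegree_finsetSum _ _).trans (Finset.sup_le fun s hs => ?_)
  rw [bind₁_monomial]
  refine (totalDegree_mul _ _).trans ?_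
  rw [totalDegree_C, zero_add]
  refine (totalDegree_finsetProd _ _).trans ?_
  calc ∑ i ∈ s.support, (f i ^ s i).totalDegree
      ≤ ∑ i ∈ s.support, d * s i :=
        Finset.sum_le_sum fun i _ =>
          (totalDegree_pow _ _).trans (by rw [mul_comm]; gcongr; exact hf i)
    _ = d * s.degree := by rw [← Finset.mul_sum]; rfl
    _ ≤ d * p.totalDegree := by gcongr; exact le_totalDegree hs

theorem eq_zero_of_isOpen_of_eval_eq_zero [Fintype σ] {p : MvPolynomial σ ℝ} {U : Set (σ → ℝ)}
    (hU : IsOpen U) (hne : U.Nonempty) (h : ∀ x ∈ U, eval x p = 0) : p = 0 := by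
  obtain ⟨y, hy⟩ := hne
  obtain ⟨ε, hε, hball⟩ := isOpen_iff.mp hU y hy
  refine funext_set (fun i => ball (y i) ε) (fun i => ?_) fun x hx => ?_
  · rw [Real.ball_eq_Ioo]; exact Set.Ioo_infinite (by linarith)
  · rw [h x (hball (by rwa [ball_pi y hε])), map_zero]

end MvPolynomial

theorem Seminorm.exists_abs_le_mul_of_finiteDimensional {V ι : Type*} [AddCommGroup V]
    [Module ℝ V] [FiniteDimensional ℝ V] (p : Seminorm ℝ V) (hp : ∀ v, p v = 0 → v = 0)
    (ℓ : ι → V →ₗ[ℝ] ℝ) (hℓ : ∀ v, ∃ C, ∀ i, |ℓ i v| ≤ C) :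
    ∃ C : ℝ≥0, ∀ i v, |ℓ i v| ≤ C * p v := by
  let : NormedAddCommGroup V :=
    AddGroupNorm.toNormedAddCommGroup { p.toAddGroupSeminorm with eq_zero_of_map_eq_zero' := hp }
  let : NormedSpace ℝ V := ⟨fun c v => (map_smul_eq_mul p c v).le⟩
  have := FiniteDimensional.complete ℝ V
  obtain ⟨C, hC⟩ := banach_steinhaus (g := fun i => LinearMap.toContinuousLinearMap (ℓ i)) hℓ
  refine ⟨C.toNNReal, fun i v => ((ℓ i).toContinuousLinearMap.le_opNorm v).trans ?_⟩
  exact mul_le_mul_of_nonneg_right ((hC i).trans (Real.le_coe_toNNReal C)) (norm_nonneg v)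

theorem setIntegral_closedBall_comp_add_smul {E F : Type*} [NormedAddCommGroup E]
    [NormedSpace ℝ E] [MeasurableSpace E] [BorelSpace E] [FiniteDimensional ℝ E]
    (μ : Measure E) [μ.IsAddHaarMeasure] [NormedAddCommGroup F] [NormedSpace ℝ F] (f : E → F)
    (x : E) {r h : ℝ} (hr : 0 ≤ r) (hh : 0 < h) :
    ∫ z in closedBall 0 r, f (x + h • z) ∂μ
      = (h ^ Module.finrank ℝ E)⁻¹ • ∫ z in closedBall x (h * r), f z ∂μ := by
  have htrans : (x + ·) ⁻¹' closedBall x (h * r) = closedBall 0 (h * r) := by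
    ext v; simp [dist_eq_norm]
  rw [Measure.setIntegral_comp_smul_of_pos μ (fun v => f (x + v)) _ hh,
    _root_.smul_closedBall _ _ hr, smul_zero, Real.norm_of_nonneg hh.le, ← htrans,
    (measurePreserving_add_left μ x).setIntegral_preimage_emb (measurableEmbedding_addLeft x)]

def polyDegLE (N k : ℕ) : Submodule ℝ (EuclideanSpace ℝ (Fin N) → ℝ) :=
  (restrictTotalDegree (Fin N) ℝ k).map (LinearMap.pi fun x => (aeval fun i => x i).toLinearMap)

instance (N k : ℕ) : FiniteDimensional ℝ (polyDegLE N k) := Module.Finite.map _ _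

section PolyDegLE

variable {N k : ℕ} {w : EuclideanSpace ℝ (Fin N) → ℝ}

theorem mem_polyDegLE : w ∈ polyDegLE N k ↔ IsPolyDegLE N k w := by
  simp [polyDegLE, IsPolyDegLE, mem_restrictTotalDegree, funext_iff, eq_comm]

namespace IsPolyDegLE

theorem continuous (hw : IsPolyDegLE N k w) : Continuous w := by
  obtain ⟨P, -, hP⟩ := hw
  rw [show w = fun x => eval (fun i => x i) P from funext hP]
  exact (continuous_eval P).comp (by fun_prop)

theorem integrableOn (hw : IsPolyDegLE N k w) {S : Set (EuclideanSpace ℝ (Fin N))}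
    (hS : Bornology.IsBounded S) : IntegrableOn w S :=
  (hw.continuous.continuousOn.integrableOn_compact hS.isCompact_closure).mono_set subset_closure

theorem comp_add_smul (hw : IsPolyDegLE N k w) (x : EuclideanSpace ℝ (Fin N)) (h : ℝ) :
    IsPolyDegLE N k fun z => w (x + h • z) := by
  obtain ⟨P, hPk, hP⟩ := hw
  refine ⟨bind₁ (fun i => C (x i) + C h * X i) P, ?_, fun z => ?_⟩
  · refine (totalDegree_bind₁_le (d := 1) (fun i => ?_) P).trans (by omega)
    refine (totalDegree_add _ _).trans (max_le (by simp) ((totalDegree_mul _ _).trans ?_))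
    simp [totalDegree_X]
  · rw [show eval (fun i => z i) = eval₂Hom (RingHom.id ℝ) fun i => z i from rfl, eval₂Hom_bind₁]
    simp [hP]

theorem eq_zero_of_eqOn_zero (hw : IsPolyDegLE N k w) {U : Set (EuclideanSpace ℝ (Fin N))}
    (hU : IsOpen U) (hne : U.Nonempty) (h : Set.EqOn w 0 U) : w = 0 := by
  obtain ⟨P, -, hP⟩ := hw
  have hP0 : P = 0 := by
    refine eq_zero_of_isOpen_of_eval_eq_zero (hU.preimage (PiLp.continuous_toLp 2 _))
      (hne.preimage (WithLp.toLp_surjective 2)) fun x hx => ?_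
    simpa [hP] using h hx
  funext x
  simp [hP, hP0]

end IsPolyDegLE

end PolyDegLE

theorem exists_forall_isPolyDegLE_abs_le_mul_integral (N k : ℕ)
    {K S : Set (EuclideanSpace ℝ (Fin N))} (hK : IsCompact K) (hS : Bornology.IsBounded S)
    (hSint : (interior S).Nonempty) :
    ∃ C : ℝ≥0, ∀ w, IsPolyDegLE N k w → ∀ y ∈ K, |w y| ≤ C * ∫ z in S, |w z| := by
  have hint (w : polyDegLE N k) : IntegrableOn (fun z => |w.1 z|) S :=
    ((mem_polyDegLE.1 w.2).integrableOn hS).abs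
  let p : Seminorm ℝ (polyDegLE N k) := Seminorm.of (fun w => ∫ z in S, |w.1 z|)
    (fun v w => (integral_mono (hint (v + w)) ((hint v).add (hint w)) fun z => abs_add_le _ _).trans
      (integral_add (hint v) (hint w)).le)
    (fun c w => by
      simp only [Submodule.coe_smul, Pi.smul_apply, smul_eq_mul, abs_mul, Real.norm_eq_abs,
        integral_const_mul])
  have hp (w : polyDegLE N k) (hw : p w = 0) : w = 0 := by
    have hae : w.1 =ᵐ[volume.restrict S] 0 := by
      filter_upwards [(integral_eq_zero_iff_of_nonneg (fun _ => abs_nonneg _) (hint w)).1 hw]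
        with z hz using abs_eq_zero.1 hz
    have hzero : Set.EqOn w.1 0 (interior S) :=
      Measure.eqOn_open_of_ae_eq (ae_restrict_of_ae_restrict_of_subset interior_subset hae)
        isOpen_interior (mem_polyDegLE.1 w.2).continuous.continuousOn continuousOn_const
    exact Subtype.ext ((mem_polyDegLE.1 w.2).eq_zero_of_eqOn_zero isOpen_interior hSint hzero)
  let ℓ (y : K) : polyDegLE N k →ₗ[ℝ] ℝ := (LinearMap.proj y.1).comp (polyDegLE N k).subtype
  have hℓ (w : polyDegLE N k) : ∃ C, ∀ y, |ℓ y w| ≤ C := by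
    obtain ⟨C, hC⟩ :=
      hK.exists_bound_of_continuousOn (mem_polyDegLE.1 w.2).continuous.continuousOn
    exact ⟨C, fun y => hC y y.2⟩
  obtain ⟨C, hC⟩ := p.exists_abs_le_mul_of_finiteDimensional hp ℓ hℓ
  exact ⟨C, fun w hw y hy => hC ⟨y, hy⟩ ⟨w, mem_polyDegLE.2 hw⟩⟩

theorem exists_forall_isPolyDegLE_abs_le_mul_setAverage (N k : ℕ) {δ : ℝ} (hδ : 0 < δ) :
    ∃ C : ℝ≥0, ∀ U : Set (EuclideanSpace ℝ (Fin N)), Bornology.IsBounded U → 0 < diam U →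
      (∃ x, closedBall x (δ * diam U) ⊆ U) →
      ∀ w, IsPolyDegLE N k w → ∀ u ∈ U, |w u| ≤ C * ⨍ z in U, |w z| := by
  obtain ⟨C, hC⟩ := exists_forall_isPolyDegLE_abs_le_mul_integral N k
    (isCompact_closedBall (0 : EuclideanSpace ℝ (Fin N)) 1)
    (isBounded_closedBall (x := 0) (r := δ))
    (by rw [interior_closedBall _ hδ.ne']; exact nonempty_ball.2 hδ)
  set κ : ℝ≥0 := (volume (closedBall (0 : EuclideanSpace ℝ (Fin N)) 1)).toNNReal
  refine ⟨C * κ, fun U hU hdiam ⟨x, hx⟩ w hw u hu => ?_⟩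
  set h := diam U
  have hxU : x ∈ U := hx (mem_closedBall_self (by positivity))
  have hUx : U ⊆ closedBall x h := fun v hv => dist_le_diam_of_mem hU hv hxU
  have hvol : volume.real U ≤ h ^ N * κ := by
    calc volume.real U ≤ volume.real (closedBall x h) :=
          measureReal_mono hUx measure_closedBall_lt_top.ne
      _ = h ^ N * κ := by
        rw [Measure.addHaar_real_closedBall' _ _ hdiam.le, finrank_euclideanSpace_fin]; rfl
  have hvol_pos : 0 < volume.real U :=
    ENNReal.toReal_pos ((measure_closedBall_pos _ _ (by positivity)).trans_le
      (measure_mono hx)).ne' hU.measure_lt_top.ne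
  have hint : IntegrableOn (fun z => |w z|) U := (hw.integrableOn hU).abs
  have hy : h⁻¹ • (u - x) ∈ closedBall (0 : EuclideanSpace ℝ (Fin N)) 1 := by
    rw [mem_closedBall_zero_iff, norm_smul, norm_inv, Real.norm_of_nonneg hdiam.le,
      ← dist_eq_norm]
    exact inv_mul_le_one_of_le₀ (dist_le_diam_of_mem hU hu hxU) hdiam.le
  calc |w u| = |w (x + h • h⁻¹ • (u - x))| := by rw [smul_inv_smul₀ hdiam.ne', add_sub_cancel]
    _ ≤ C * ∫ z in closedBall 0 δ, |w (x + h • z)| := hC _ (hw.comp_add_smul x h) _ hy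
    _ = C * ((h ^ N)⁻¹ * ∫ z in closedBall x (h * δ), |w z|) := by
        rw [setIntegral_closedBall_comp_add_smul volume (fun z => |w z|) x hδ.le hdiam,
          finrank_euclideanSpace_fin, smul_eq_mul]
    _ ≤ C * ((h ^ N)⁻¹ * ∫ z in U, |w z|) := by
        gcongr
        · exact ae_of_all _ fun z => abs_nonneg _
        · rwa [mul_comm]
    _ ≤ C * (κ * (volume.real U)⁻¹ * ∫ z in U, |w z|) := by
        gcongr
        rw [← div_eq_mul_inv, le_div_iff₀ hvol_pos, inv_mul_le_iff₀ (by positivity)]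
        exact hvol
    _ = C * κ * ⨍ z in U, |w z| := by rw [setAverage_eq, smul_eq_mul]; ring

theorem exists_forall_isPolyDegLE_eLpNorm_top_le (N k : ℕ) {δ : ℝ} (hδ : 0 < δ) :
    ∃ M : ℝ, 1 ≤ M ∧ ∀ U : Set (EuclideanSpace ℝ (Fin N)), Bornology.IsBounded U →
      MeasurableSet U → 0 < diam U → (∃ x, closedBall x (δ * diam U) ⊆ U) →
      ∀ w, IsPolyDegLE N k w →
        eLpNorm w ⊤ (volume.restrict U)
          ≤ ENNReal.ofReal M * (eLpNorm w 1 (volume.restrict U) / volume U) := by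
  obtain ⟨C, hC⟩ := exists_forall_isPolyDegLE_abs_le_mul_setAverage N k hδ
  refine ⟨max 1 C, le_max_left _ _, fun U hU hUm hdiam hball w hw => ?_⟩
  calc eLpNorm w ⊤ (volume.restrict U) ≤ ENNReal.ofReal (C * ⨍ z in U, |w z|) := by
        rw [eLpNorm_exponent_top]
        refine eLpNormEssSup_le_of_ae_bound ((ae_restrict_iff' hUm).2 (ae_of_all _ fun u hu => ?_))
        exact (Real.norm_eq_abs _).trans_le (hC U hU hdiam hball w hw u hu)
    _ ≤ ENNReal.ofReal (max 1 C) * ENNReal.ofReal (⨍ z in U, |w z|) := by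
        rw [ENNReal.ofReal_mul C.coe_nonneg]
        gcongr
        exact le_max_right _ _
    _ = ENNReal.ofReal (max 1 C) * (eLpNorm w 1 (volume.restrict U) / volume U) := by
        rw [ofReal_setAverage (hw.integrableOn hU).abs (ae_of_all _ fun _ => abs_nonneg _),
          eLpNorm_one_eq_lintegral_enorm]
        simp only [Real.enorm_eq_ofReal_abs]

theorem direct_and_reverse_lebesgue_embeddings_general
    (N k : ℕ) (δ : ℝ) (hδ : 0 < δ) (q m : ℝ≥0∞) (hq : 1 ≤ q) (hm : 1 ≤ m) :
    ∃ M : ℝ, 1 ≤ M ∧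
      ∀ U : Set (EuclideanSpace ℝ (Fin N)),
        Bornology.IsBounded U → MeasurableSet U → 0 < volume U → 0 < Metric.diam U →
        (∃ x, Metric.closedBall x (δ * Metric.diam U) ⊆ U) →
        ∀ w : EuclideanSpace ℝ (Fin N) → ℝ, IsPolyDegLE N k w →
          (ENNReal.ofReal M)⁻¹ * volume U ^ ((q⁻¹).toReal - (m⁻¹).toReal) *
              eLpNorm w m (volume.restrict U)
            ≤ eLpNorm w q (volume.restrict U) ∧
          eLpNorm w q (volume.restrict U)
            ≤ ENNReal.ofReal M * volume U ^ ((q⁻¹).toReal - (m⁻¹).toReal) *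
              eLpNorm w m (volume.restrict U) := by
  obtain ⟨M, hM, hsup⟩ := exists_forall_isPolyDegLE_eLpNorm_top_le N k hδ
  refine ⟨M, hM, fun U hU hUm hU0 hdiam hball w hw => ?_⟩
  have hf := hw.continuous.aestronglyMeasurable (μ := volume.restrict U)
  have hμ0 : volume.restrict U Set.univ ≠ 0 := by
    rw [Measure.restrict_apply_univ]; exact hU0.ne'
  have hμ : volume.restrict U Set.univ ≠ ∞ := by
    rw [Measure.restrict_apply_univ]; exact hU.measure_lt_top.ne
  have hbound : eLpNorm w ⊤ (volume.restrict U)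
      ≤ ENNReal.ofReal M * (eLpNorm w 1 (volume.restrict U) / volume.restrict U Set.univ) := by
    rw [Measure.restrict_apply_univ]; exact hsup U hU hUm hdiam hball w hw
  have hM0 : ENNReal.ofReal M ≠ 0 := (ENNReal.ofReal_pos.2 (by linarith)).ne'
  have hreverse :=
    inv_mul_rpow_measure_univ_mul_eLpNorm_le hf hμ0 hμ hM0 ENNReal.ofReal_ne_top hbound hq m
  have hdirect := eLpNorm_le_mul_rpow_measure_univ_mul_eLpNorm hf hμ0 hμ hbound q hm
  rw [Measure.restrict_apply_univ] at hreverse hdirect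
  exact ⟨hreverse, hdirect⟩

/-- Direct and reverse Lebesgue embeddings on local polynomial spaces:
`‖w‖_{L^q(U)} ≈ |U|^{1/q - 1/m} ‖w‖_{L^m(U)}` uniformly over sets `U` satisfying the
`δ`-ball condition. -/
theorem direct_and_reverse_lebesgue_embeddings
    (N k : ℕ) (hN : 1 ≤ N) (δ : ℝ) (hδ : 0 < δ) (q m : ℝ≥0∞) (hq : 1 ≤ q) (hm : 1 ≤ m) :
    ∃ M : ℝ, 1 ≤ M ∧
      ∀ U : Set (EuclideanSpace ℝ (Fin N)),
        Bornology.IsBounded U → MeasurableSet U → 0 < volume U → 0 < Metric.diam U →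
        (∃ x, Metric.closedBall x (δ * Metric.diam U) ⊆ U) →
        ∀ w : EuclideanSpace ℝ (Fin N) → ℝ, IsPolyDegLE N k w →
          (ENNReal.ofReal M)⁻¹ * volume U ^ ((q⁻¹).toReal - (m⁻¹).toReal) *
              eLpNorm w m (volume.restrict U)
            ≤ eLpNorm w q (volume.restrict U) ∧
          eLpNorm w q (volume.restrict U)
            ≤ ENNReal.ofReal M * volume U ^ ((q⁻¹).toReal - (m⁻¹).toReal) *
              eLpNorm w m (volume.restrict U) :=
  direct_and_reverse_lebesgue_embeddings_general N k δ hδ q m hq hm
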